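/- arXiv:1504.05801 — 2 statements merged into one kernel-verified Lean document; each statement's English description precedes it below -/
import Mathlib

section
/- For real q with 0 < q ≠ 1, odd positive integers w₁,...,wₙ, integers k₁,...,k_{n-1}, and reals x, y: [y + wₙx + wₙ∑_{j=1}^{n-1} k_j/w_j]_{q^{w₁⋯w_{n-1}}} = ([wₙ]_q / [∏_{j=1}^{n-1} w_j]_q) · [∑_{j=1}^{n-1}(∏_{i≠j} w_i)k_j]_{q^{wₙ}} + q^{wₙ·∑_{j=1}^{n-1}(∏_{i≠j} w_i)k_j} · [y + wₙx]_{q^{w₁⋯w_{n-1}}}, where [x]_q = (1-q^x)/(1-q) and all products ∏_{i≠j} run over i ∈ {1,...,n-1} with i ≠ j. -/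
/-
With `P = w₀⋯w_{n-1}`, `W = wₙ` and `K = P · ∑ k_j/w_j`, the left side is `[W·K/P + (y + Wx)]`
in base `q^P`. Additivity `[a + b]_q = [a]_q + q^a [b]_q` splits off `[y + Wx]_{q^P}` with factor
`(q^P)^{WK/P} = q^{WK}`, and the change of base `[ab]_q = [a]_q [b]_{q^a}` gives
`[P]_q · [WK/P]_{q^P} = [WK]_q = [W]_q · [K]_{q^W}`.
-/

open Finset

noncomputable def qNum (q x : ℝ) : ℝ := (1 - q ^ x) / (1 - q)

section qNum

variable {q : ℝ}

theorem qNum_add (hq : 0 < q) (a b : ℝ) : qNum q (a + b) = qNum q a + q ^ a * qNum q b := by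
  simp only [qNum, Real.rpow_add hq]
  ring

theorem qNum_mul (hq : 0 < q) (a b : ℝ) : qNum q (a * b) = qNum q a * qNum (q ^ a) b := by
  by_cases hqa : q ^ a = 1
  · -- `q ^ a = 1` forces `q = 1` (both sides are `0 / 0`) or `a = 0` (both sides vanish)
    by_cases hq1 : q = 1
    · simp [qNum, hq1]
    · have ha : a = 0 := (Real.rpow_right_inj hq hq1).1 (hqa.trans (Real.rpow_zero q).symm)
      simp [qNum, ha]
  · have hqa' : 1 - q ^ a ≠ 0 := sub_ne_zero.2 (Ne.symm hqa)
    simp only [qNum, ← Real.rpow_mul hq.le]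
    field_simp

theorem qNum_ne_zero (hq : 0 < q) (hq1 : q ≠ 1) {a : ℝ} (ha : a ≠ 0) : qNum q a ≠ 0 := by
  have hqa : q ^ a ≠ 1 := fun h =>
    ha ((Real.rpow_right_inj hq hq1).1 (h.trans (Real.rpow_zero q).symm))
  exact div_ne_zero (sub_ne_zero.2 (Ne.symm hqa)) (sub_ne_zero.2 (Ne.symm hq1))

end qNum

theorem Finset.prod_mul_sum_div {ι K : Type*} [Field K] [DecidableEq ι] (s : Finset ι)
    (f g : ι → K) (hf : ∀ i ∈ s, f i ≠ 0) :
    (∏ i ∈ s, f i) * ∑ j ∈ s, g j / f j = ∑ j ∈ s, (∏ i ∈ s.erase j, f i) * g j := by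
  rw [mul_sum]
  refine sum_congr rfl fun j hj => ?_
  rw [← mul_prod_erase s f hj]
  field_simp [hf j hj]

theorem qNum_decompose_general (n : ℕ) (w : Fin (n + 1) → ℕ)
    (hw0 : ∀ i, 0 < w i)
    (k : Fin n → ℤ) (q x y : ℝ) (hq : 0 < q) (hq1 : q ≠ 1) :
    qNum (q ^ (∏ j : Fin n, (w j.castSucc : ℝ)))
        (y + (w (Fin.last n) : ℝ) * x +
          (w (Fin.last n) : ℝ) * ∑ j : Fin n, (k j : ℝ) / (w j.castSucc : ℝ)) =
      (qNum q (w (Fin.last n) : ℝ) / qNum q (∏ j : Fin n, (w j.castSucc : ℝ))) *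
          qNum (q ^ ((w (Fin.last n) : ℕ) : ℝ))
            (∑ j : Fin n, (∏ i ∈ Finset.univ.erase j, (w i.castSucc : ℝ)) * (k j : ℝ)) +
        q ^ ((w (Fin.last n) : ℝ) *
              ∑ j : Fin n, (∏ i ∈ Finset.univ.erase j, (w i.castSucc : ℝ)) * (k j : ℝ)) *
          qNum (q ^ (∏ j : Fin n, (w j.castSucc : ℝ)))
            (y + (w (Fin.last n) : ℝ) * x) := by
  set W : ℝ := (w (Fin.last n) : ℝ)
  set P : ℝ := ∏ j : Fin n, (w j.castSucc : ℝ)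
  set S : ℝ := ∑ j : Fin n, (k j : ℝ) / (w j.castSucc : ℝ)
  set K : ℝ := ∑ j : Fin n, (∏ i ∈ univ.erase j, (w i.castSucc : ℝ)) * (k j : ℝ)
  have hPS : P * S = K :=
    prod_mul_sum_div _ _ _ fun j _ => Nat.cast_ne_zero.2 (hw0 j.castSucc).ne'
  have hP : qNum q P ≠ 0 :=
    qNum_ne_zero hq hq1 (prod_ne_zero_iff.2 fun j _ => Nat.cast_ne_zero.2 (hw0 j.castSucc).ne')
  have hWS : qNum (q ^ P) (W * S) = qNum q W / qNum q P * qNum (q ^ W) K := by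
    rw [div_mul_eq_mul_div, eq_div_iff hP, ← qNum_mul hq, mul_comm, ← qNum_mul hq, ← hPS]
    ring_nf
  rw [add_comm _ (W * S), qNum_add (Real.rpow_pos_of_pos hq P), hWS, ← Real.rpow_mul hq.le,
    mul_left_comm, hPS]

/-- Equation (13): with `w₀,…,wₙ` odd positive integers (the last one being the
`w_n` of the paper) and `K = ∑_{j<n} (∏_{i<n, i≠j} w_i) k_j`,
`[y + wₙx + wₙ∑_{j<n} k_j/w_j]_{q^{w₀⋯w_{n-1}}}
  = ([wₙ]_q/[∏_{j<n} w_j]_q)·[K]_{q^{wₙ}} + q^{wₙK}·[y + wₙx]_{q^{w₀⋯w_{n-1}}}`. -/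
theorem qNum_decompose (n : ℕ) (w : Fin (n + 1) → ℕ)
    (hw : ∀ i, Odd (w i)) (hw0 : ∀ i, 0 < w i)
    (k : Fin n → ℤ) (q x y : ℝ) (hq : 0 < q) (hq1 : q ≠ 1) :
    qNum (q ^ (∏ j : Fin n, (w j.castSucc : ℝ)))
        (y + (w (Fin.last n) : ℝ) * x +
          (w (Fin.last n) : ℝ) * ∑ j : Fin n, (k j : ℝ) / (w j.castSucc : ℝ)) =
      (qNum q (w (Fin.last n) : ℝ) / qNum q (∏ j : Fin n, (w j.castSucc : ℝ))) *
          qNum (q ^ ((w (Fin.last n) : ℕ) : ℝ))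
            (∑ j : Fin n, (∏ i ∈ Finset.univ.erase j, (w i.castSucc : ℝ)) * (k j : ℝ)) +
        q ^ ((w (Fin.last n) : ℝ) *
              ∑ j : Fin n, (∏ i ∈ Finset.univ.erase j, (w i.castSucc : ℝ)) * (k j : ℝ)) *
          qNum (q ^ (∏ j : Fin n, (w j.castSucc : ℝ)))
            (y + (w (Fin.last n) : ℝ) * x) :=
  qNum_decompose_general n w hw0 k q x y hq hq1
end

section
/- For odd positive integers w₁, w₂ and the Carlitz q-Euler polynomials ℰ_{l,q}(x) ∈ ℚ(q) (x an integer), (1/(1+q^{w₁}))·∑_{l=0}^{1} C(1,l)[w₁]_q^l [w₂]_q^{1-l} ℰ_{l,q^{w₁}}(w₂x)·T̂_{1,q^{w₂}}(w₁ | l) = (1/(1+q^{w₂}))·∑_{l=0}^{1} C(1,l)[w₂]_q^l [w₁]_q^{1-l} ℰ_{l,q^{w₂}}(w₁x)·T̂_{1,q^{w₁}}(w₂ | l), where T̂_{m,q}(w | l) = ∑_{k=0}^{w-1} q^{(l+1)k} [k]_q^{m-l} (-1)^k. -/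
open Finset

/-- The Carlitz q-Euler recurrence with base `Q`:
`Q·∑_{l=0}^n C(n,l) Q^l ℰ_l + ℰ_n = (1+Q)δ_{0,n}`. -/
def CarlitzRec (Q : RatFunc ℚ) (E : ℕ → RatFunc ℚ) : Prop :=
  ∀ n : ℕ,
    Q * (∑ l ∈ range (n + 1), (n.choose l : RatFunc ℚ) * Q ^ l * E l) + E n =
      if n = 0 then 1 + Q else 0

/-- `[x]_Q = (1 - Q^x)/(1 - Q)` for an integer `x`. -/
noncomputable def qInt (Q : RatFunc ℚ) (x : ℤ) : RatFunc ℚ := (1 - Q ^ x) / (1 - Q)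

/-- The q-Euler polynomial with base `Q` and Carlitz numbers `E` at an integer
argument: `ℰ_{n,Q}(x) = ∑_{l=0}^n C(n,l) Q^{lx} ℰ_l [x]_Q^{n-l}`. -/
noncomputable def qEulerPoly (Q : RatFunc ℚ) (E : ℕ → RatFunc ℚ) (n : ℕ) (x : ℤ) :
    RatFunc ℚ :=
  ∑ l ∈ range (n + 1),
    (n.choose l : RatFunc ℚ) * Q ^ ((l : ℤ) * x) * E l * qInt Q x ^ (n - l)

/-- `T̂_{m,Q}(w | l) = ∑_{k=0}^{w-1} (-1)^k Q^{(l+1)k} [k]_Q^{m-l}`. -/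
noncomputable def That (Q : RatFunc ℚ) (w m l : ℕ) : RatFunc ℚ :=
  ∑ k ∈ range w, (-1 : RatFunc ℚ) ^ k * Q ^ ((l + 1) * k) * qInt Q (k : ℤ) ^ (m - l)

set_option maxRecDepth 8000

lemma Xpow_sub_one_ne (w : ℕ) (hw : 0 < w) :
    (1 : RatFunc ℚ) - RatFunc.X ^ w ≠ 0 := by
  have h := RatFunc.algebraMap_ne_zero
    (K := ℚ) (Polynomial.X_pow_sub_C_ne_zero hw (1 : ℚ))
  intro hc
  apply h
  rw [map_sub, map_pow, RatFunc.algebraMap_X, Polynomial.C_1, map_one]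
  linear_combination -hc

lemma Xpow_add_one_ne (w : ℕ) (hw : 0 < w) :
    (1 : RatFunc ℚ) + RatFunc.X ^ w ≠ 0 := by
  have h := RatFunc.algebraMap_ne_zero
    (K := ℚ) (Polynomial.X_pow_add_C_ne_zero hw (1 : ℚ))
  intro hc
  apply h
  rw [map_add, map_pow, RatFunc.algebraMap_X, Polynomial.C_1, map_one]
  linear_combination hc

lemma Xpow_sq_add_one_ne (w : ℕ) (hw : 0 < w) :
    (1 : RatFunc ℚ) + (RatFunc.X ^ w) ^ 2 ≠ 0 := by
  have := Xpow_add_one_ne (2 * w) (by omega)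
  rw [pow_mul] at this
  exact fun hc => this (by rw [← hc]; ring)

lemma alt_geom (r : RatFunc ℚ) {w : ℕ} (hw : Odd w) :
    (1 + r) * ∑ k ∈ range w, (-r) ^ k = 1 + r ^ w := by
  have h := geom_sum_mul (-r) w
  have h2 : (-r) ^ w = -(r ^ w) := hw.neg_pow r
  linear_combination -h - h2

lemma carlitz_E0 {w : ℕ} (hw : 0 < w) {E : ℕ → RatFunc ℚ}
    (hE : CarlitzRec (RatFunc.X ^ w) E) : E 0 = 1 := by
  have h0 := hE 0
  simp [Finset.sum_range_one] at h0
  have h' : ((1 : RatFunc ℚ) + RatFunc.X ^ w) * (E 0 - 1) = 0 := by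
    linear_combination h0
  rcases mul_eq_zero.mp h' with h | h
  · exact absurd h (Xpow_add_one_ne w hw)
  · exact sub_eq_zero.mp h

lemma carlitz_E1 {w : ℕ} (hw : 0 < w) {E : ℕ → RatFunc ℚ}
    (hE : CarlitzRec (RatFunc.X ^ w) E) :
    E 1 = -(RatFunc.X ^ w) / (1 + (RatFunc.X ^ w) ^ 2) := by
  have h1 := hE 1
  simp [Finset.sum_range_succ, Finset.sum_range_one, carlitz_E0 hw hE] at h1
  rw [eq_div_iff (Xpow_sq_add_one_ne w hw)]
  linear_combination h1

lemma That11' (Q : RatFunc ℚ) {w : ℕ} (hw : Odd w) :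
    (1 + Q ^ 2) * That Q w 1 1 = 1 + (Q ^ w) ^ 2 := by
  have hsum : That Q w 1 1 = ∑ k ∈ range w, (-(Q ^ 2)) ^ k := by
    unfold That
    refine Finset.sum_congr rfl fun k _ => ?_
    simp only [Nat.sub_self, pow_zero, mul_one]
    rw [show ((1 : ℕ) + 1) * k = k + k by ring, pow_add,
      show (-(Q ^ 2) : RatFunc ℚ) = -1 * Q * Q by ring, mul_pow, mul_pow]
    ring
  rw [hsum, alt_geom (Q ^ 2) hw, ← pow_mul, ← pow_mul, mul_comm]

lemma That10' (Q : RatFunc ℚ) (hQ : (1 : RatFunc ℚ) - Q ≠ 0)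
    (h2 : (1 : RatFunc ℚ) + Q ≠ 0) (h3 : (1 : RatFunc ℚ) + Q ^ 2 ≠ 0)
    {w : ℕ} (hw : Odd w) :
    ((1 - Q) * ((1 + Q) * (1 + Q ^ 2))) * That Q w 1 0 =
      (1 + Q ^ w) * (1 + Q ^ 2) - (1 + (Q ^ w) ^ 2) * (1 + Q) := by
  have key : (1 - Q) * That Q w 1 0 =
      (∑ k ∈ range w, (-Q) ^ k) - ∑ k ∈ range w, (-(Q ^ 2)) ^ k := by
    unfold That
    rw [Finset.mul_sum, ← Finset.sum_sub_distrib]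
    refine Finset.sum_congr rfl fun k _ => ?_
    have hq : qInt Q (k : ℤ) = (1 - Q ^ k) / (1 - Q) := by
      rw [qInt, zpow_natCast]
    rw [hq]
    rw [show ((0 : ℕ) + 1) * k = k by ring, Nat.sub_zero, pow_one]
    rw [show (-Q : RatFunc ℚ) = -1 * Q by ring,
      show (-(Q ^ 2) : RatFunc ℚ) = -1 * Q * Q by ring, mul_pow, mul_pow, mul_pow]
    field_simp
  have g1 := alt_geom Q hw
  have g2 := alt_geom (Q ^ 2) hw
  have e2 : (Q ^ 2) ^ w = (Q ^ w) ^ 2 := by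
    rw [← pow_mul, ← pow_mul, mul_comm]
  rw [e2] at g2
  calc ((1 - Q) * ((1 + Q) * (1 + Q ^ 2))) * That Q w 1 0
      = ((1 + Q) * (1 + Q ^ 2)) * ((1 - Q) * That Q w 1 0) := by ring
    _ = ((1 + Q) * (1 + Q ^ 2)) *
        ((∑ k ∈ range w, (-Q) ^ k) - ∑ k ∈ range w, (-(Q ^ 2)) ^ k) := by rw [key]
    _ = (1 + Q ^ w) * (1 + Q ^ 2) - (1 + (Q ^ w) ^ 2) * (1 + Q) := by
        linear_combination (1 + Q ^ 2) * g1 - (1 + Q) * g2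

lemma qEulerPoly0 (Q : RatFunc ℚ) (E : ℕ → RatFunc ℚ) (hE0 : E 0 = 1) (y : ℤ) :
    qEulerPoly Q E 0 y = 1 := by
  simp [qEulerPoly, Finset.sum_range_one, hE0]

lemma qEulerPoly1 (Q : RatFunc ℚ) (E : ℕ → RatFunc ℚ) (hE0 : E 0 = 1) (y : ℤ) :
    qEulerPoly Q E 1 y = qInt Q y + Q ^ y * E 1 := by
  simp [qEulerPoly, Finset.sum_range_succ, Finset.sum_range_one, hE0]


set_option maxHeartbeats 4000000 in
lemma coreAux (a b c d t : RatFunc ℚ)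
    (h1t : 1 - t ≠ 0) (h1a : 1 - a ≠ 0) (h1b : 1 - b ≠ 0)
    (h2a : 1 + a ≠ 0) (h2b : 1 + b ≠ 0)
    (h3a : 1 + a ^ 2 ≠ 0) (h3b : 1 + b ^ 2 ≠ 0) :
    (1 / (1 + a)) *
      (((1 - b) / (1 - t)) *
          (((1 + c) * (1 + b ^ 2) - (1 + c ^ 2) * (1 + b)) /
            ((1 - b) * ((1 + b) * (1 + b ^ 2)))) +
        ((1 - a) / (1 - t)) *
          ((1 - d) / (1 - a) + d * (-a / (1 + a ^ 2))) *
          ((1 + c ^ 2) / (1 + b ^ 2))) =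
    (1 / (1 + b)) *
      (((1 - a) / (1 - t)) *
          (((1 + c) * (1 + a ^ 2) - (1 + c ^ 2) * (1 + a)) /
            ((1 - a) * ((1 + a) * (1 + a ^ 2)))) +
        ((1 - b) / (1 - t)) *
          ((1 - d) / (1 - b) + d * (-b / (1 + b ^ 2))) *
          ((1 + c ^ 2) / (1 + a ^ 2))) := by
  field_simp
  ring

set_option maxHeartbeats 1000000 in
/-- The `n = 2`, `m = 1` instance of Theorem 3: symmetry in `w₁, w₂` of
`(1/(1+q^{w₁}))·∑_{l=0}^1 C(1,l)[w₁]_q^l [w₂]_q^{1-l} ℰ_{l,q^{w₁}}(w₂x)·T̂_{1,q^{w₂}}(w₁|l)`. -/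
theorem symmetry_n2_m1 (w₁ w₂ : ℕ) (hw₁ : Odd w₁) (hw₁0 : 0 < w₁)
    (hw₂ : Odd w₂) (hw₂0 : 0 < w₂) (x : ℤ)
    (E₁ E₂ : ℕ → RatFunc ℚ)
    (hE₁ : CarlitzRec (RatFunc.X ^ w₁) E₁)
    (hE₂ : CarlitzRec (RatFunc.X ^ w₂) E₂) :
    (1 / (1 + RatFunc.X ^ w₁)) *
        ∑ l ∈ range 2,
          (Nat.choose 1 l : RatFunc ℚ) * qInt RatFunc.X (w₁ : ℤ) ^ l *
            qInt RatFunc.X (w₂ : ℤ) ^ (1 - l) *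
            qEulerPoly (RatFunc.X ^ w₁) E₁ l ((w₂ : ℤ) * x) *
            That (RatFunc.X ^ w₂) w₁ 1 l =
      (1 / (1 + RatFunc.X ^ w₂)) *
        ∑ l ∈ range 2,
          (Nat.choose 1 l : RatFunc ℚ) * qInt RatFunc.X (w₂ : ℤ) ^ l *
            qInt RatFunc.X (w₁ : ℤ) ^ (1 - l) *
            qEulerPoly (RatFunc.X ^ w₂) E₂ l ((w₁ : ℤ) * x) *
            That (RatFunc.X ^ w₁) w₂ 1 l := by
  have h1t : (1 : RatFunc ℚ) - RatFunc.X ≠ 0 := by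
    simpa using Xpow_sub_one_ne 1 one_pos
  have h1a : (1 : RatFunc ℚ) - RatFunc.X ^ w₁ ≠ 0 := Xpow_sub_one_ne w₁ hw₁0
  have h1b : (1 : RatFunc ℚ) - RatFunc.X ^ w₂ ≠ 0 := Xpow_sub_one_ne w₂ hw₂0
  have h2a : (1 : RatFunc ℚ) + RatFunc.X ^ w₁ ≠ 0 := Xpow_add_one_ne w₁ hw₁0
  have h2b : (1 : RatFunc ℚ) + RatFunc.X ^ w₂ ≠ 0 := Xpow_add_one_ne w₂ hw₂0
  have h3a : (1 : RatFunc ℚ) + (RatFunc.X ^ w₁) ^ 2 ≠ 0 := Xpow_sq_add_one_ne w₁ hw₁0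
  have h3b : (1 : RatFunc ℚ) + (RatFunc.X ^ w₂) ^ 2 ≠ 0 := Xpow_sq_add_one_ne w₂ hw₂0
  -- atoms
  have hcL : ((RatFunc.X : RatFunc ℚ) ^ w₂) ^ w₁ = RatFunc.X ^ (w₁ * w₂) := by
    rw [← pow_mul, mul_comm]
  have hcR : ((RatFunc.X : RatFunc ℚ) ^ w₁) ^ w₂ = RatFunc.X ^ (w₁ * w₂) := by
    rw [← pow_mul]
  have hzA : (RatFunc.X ^ w₁ : RatFunc ℚ) ^ ((w₂ : ℤ) * x)
      = RatFunc.X ^ ((w₁ : ℤ) * (w₂ : ℤ) * x) := by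
    rw [← zpow_natCast (RatFunc.X : RatFunc ℚ) w₁, ← zpow_mul, mul_assoc]
  have hzB : (RatFunc.X ^ w₂ : RatFunc ℚ) ^ ((w₁ : ℤ) * x)
      = RatFunc.X ^ ((w₁ : ℤ) * (w₂ : ℤ) * x) := by
    rw [← zpow_natCast (RatFunc.X : RatFunc ℚ) w₂, ← zpow_mul, ← mul_assoc,
      mul_comm (w₂ : ℤ) (w₁ : ℤ)]
  have hqA : qInt (RatFunc.X ^ w₁) ((w₂ : ℤ) * x)
      = (1 - RatFunc.X ^ ((w₁ : ℤ) * (w₂ : ℤ) * x)) / (1 - RatFunc.X ^ w₁) := by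
    rw [qInt, hzA]
  have hqB : qInt (RatFunc.X ^ w₂) ((w₁ : ℤ) * x)
      = (1 - RatFunc.X ^ ((w₁ : ℤ) * (w₂ : ℤ) * x)) / (1 - RatFunc.X ^ w₂) := by
    rw [qInt, hzB]
  have hq1 : qInt RatFunc.X (w₁ : ℤ) = (1 - RatFunc.X ^ w₁) / (1 - RatFunc.X) := by
    rw [qInt, zpow_natCast]
  have hq2 : qInt RatFunc.X (w₂ : ℤ) = (1 - RatFunc.X ^ w₂) / (1 - RatFunc.X) := by
    rw [qInt, zpow_natCast]
  have hE₁0 := carlitz_E0 hw₁0 hE₁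
  have hE₂0 := carlitz_E0 hw₂0 hE₂
  have hE₁1 := carlitz_E1 hw₁0 hE₁
  have hE₂1 := carlitz_E1 hw₂0 hE₂
  have hT1L : That (RatFunc.X ^ w₂) w₁ 1 1
      = (1 + (RatFunc.X ^ (w₁ * w₂)) ^ 2) / (1 + (RatFunc.X ^ w₂) ^ 2) := by
    rw [eq_div_iff h3b]
    have := That11' (RatFunc.X ^ w₂) hw₁
    rw [hcL] at this
    linear_combination this
  have hT1R : That (RatFunc.X ^ w₁) w₂ 1 1
      = (1 + (RatFunc.X ^ (w₁ * w₂)) ^ 2) / (1 + (RatFunc.X ^ w₁) ^ 2) := by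
    rw [eq_div_iff h3a]
    have := That11' (RatFunc.X ^ w₁) hw₂
    rw [hcR] at this
    linear_combination this
  have hT0L : That (RatFunc.X ^ w₂) w₁ 1 0
      = ((1 + RatFunc.X ^ (w₁ * w₂)) * (1 + (RatFunc.X ^ w₂) ^ 2)
          - (1 + (RatFunc.X ^ (w₁ * w₂)) ^ 2) * (1 + RatFunc.X ^ w₂))
        / ((1 - RatFunc.X ^ w₂) * ((1 + RatFunc.X ^ w₂) * (1 + (RatFunc.X ^ w₂) ^ 2))) := by
    rw [eq_div_iff (mul_ne_zero h1b (mul_ne_zero h2b h3b))]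
    have := That10' (RatFunc.X ^ w₂) h1b h2b h3b hw₁
    rw [hcL] at this
    linear_combination this
  have hT0R : That (RatFunc.X ^ w₁) w₂ 1 0
      = ((1 + RatFunc.X ^ (w₁ * w₂)) * (1 + (RatFunc.X ^ w₁) ^ 2)
          - (1 + (RatFunc.X ^ (w₁ * w₂)) ^ 2) * (1 + RatFunc.X ^ w₁))
        / ((1 - RatFunc.X ^ w₁) * ((1 + RatFunc.X ^ w₁) * (1 + (RatFunc.X ^ w₁) ^ 2))) := by
    rw [eq_div_iff (mul_ne_zero h1a (mul_ne_zero h2a h3a))]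
    have := That10' (RatFunc.X ^ w₁) h1a h2a h3a hw₂
    rw [hcR] at this
    linear_combination this
  simp only [Finset.sum_range_succ, Finset.sum_range_zero, Nat.choose_self,
    Nat.choose_zero_right, Nat.cast_one, pow_zero, pow_one, one_mul, mul_one, zero_add,
    Nat.sub_self, Nat.sub_zero]
  rw [qEulerPoly0 _ _ hE₁0, qEulerPoly0 _ _ hE₂0,
    qEulerPoly1 _ _ hE₁0, qEulerPoly1 _ _ hE₂0,
    hT0L, hT1L, hT0R, hT1R, hqA, hqB, hq1, hq2, hzA, hzB, hE₁1, hE₂1]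
  linear_combination coreAux (RatFunc.X ^ w₁) (RatFunc.X ^ w₂) (RatFunc.X ^ (w₁ * w₂))
    (RatFunc.X ^ ((w₁ : ℤ) * (w₂ : ℤ) * x)) RatFunc.X h1t h1a h1b h2a h2b h3a h3b
end
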